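/- arXiv:1903.08765 — 4 statements merged into one kernel-verified Lean document; each statement's English description precedes it below -/
import Mathlib

section
/- Let B be a group and p ≥ 2 an integer, and let W = B ≀ C_p be the permutational wreath product of B with the cyclic group C_p acting on p points. An element (r_1, …, r_p) of the base group B^p lies in the commutator subgroup of W if and only if the product r_1 r_2 ⋯ r_p lies in the commutator subgroup B' of B. -/
/-- The cyclic shift action of `C_p = ZMod p` on the direct power `B^p`. -/
def cycShift (B : Type*) [Group B] (p : ℕ) :
    Multiplicative (ZMod p) →* MulAut (ZMod p → B) where
  toFun k := MulEquiv.arrowCongr (Equiv.addRight (Multiplicative.toAdd k)) (MulEquiv.refl B)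
  map_one' := by
    ext f i
    simp [MulEquiv.arrowCongr] <;> rfl
  map_mul' a b := by
    ext f i
    simp only [MulEquiv.arrowCongr, Equiv.coe_addRight, MulEquiv.coe_mk, Equiv.coe_fn_mk,
      MulEquiv.refl_apply, toAdd_mul, MulAut.mul_apply]
    congr 1
    simp only [Equiv.addRight_symm, Equiv.coe_addRight]
    abel

/-- The permutational wreath product `B ≀ C_p` with `C_p` acting on `p` points by cyclic shift. -/
abbrev Wr (B : Type*) [Group B] (p : ℕ) : Type _ :=
  (ZMod p → B) ⋊[cycShift B p] Multiplicative (ZMod p)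

/-! In `W^{ab}`, conjugating by a rotation identifies `(1,…,b,…,1)` with `(b,1,…,1)`, so the
base element `(r_i)` has the same image as `(r_1 ⋯ r_p, 1, …, 1)`. The map `b ↦ (b,1,…,1)` thus
induces `B^{ab} → W^{ab}`, and it is split, hence injective, by the homomorphism `W → B^{ab}`,
`((r_i), k) ↦ ∏ r_i`, which is well defined because that product is invariant under cyclic shifts
of `(r_i)`. -/

theorem ZMod.list_prod_map_range {p : ℕ} [NeZero p] {M : Type*} [CommMonoid M] (g : ZMod p → M) :
    ((List.range p).map fun i => g (i : ZMod p)).prod = ∏ i, g i := by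
  classical
  have hnodup : ((List.range p).map ((↑) : ℕ → ZMod p)).Nodup :=
    List.nodup_range.map_on fun a ha b hb hab => by
      simpa [Nat.mod_eq_of_lt, List.mem_range.mp ha, List.mem_range.mp hb]
        using congrArg ZMod.val hab
  have huniv : ((List.range p).map ((↑) : ℕ → ZMod p)).toFinset = Finset.univ := by
    ext i
    simpa using ⟨i.val, ZMod.val_lt i, ZMod.natCast_zmod_val i⟩
  rw [← huniv, List.prod_toFinset g hnodup]
  -- the cast in the statement lifts `List.range p` through the list monad, as `>>= pure ∘ (↑)`
  exact congrArg (fun l => (List.map g l).prod) (List.flatMap_pure_eq_map _ _)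

theorem Abelianization.of_eq_one_iff {G : Type*} [Group G] {x : G} :
    Abelianization.of x = 1 ↔ x ∈ commutator G := by
  rw [← Abelianization.ker_of, MonoidHom.mem_ker]

namespace Wr

open SemidirectProduct

variable {B : Type*} [Group B] {p : ℕ}

theorem cycShift_apply (k : Multiplicative (ZMod p)) (f : ZMod p → B) (j : ZMod p) :
    cycShift B p k f j = f (j - Multiplicative.toAdd k) := by
  simp [cycShift, MulEquiv.arrowCongr, sub_eq_add_neg]

theorem cycShift_mulSingle (i j : ZMod p) (b : B) :
    cycShift B p (Multiplicative.ofAdd i) (Pi.mulSingle j b) = Pi.mulSingle (j + i) b := by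
  funext x
  simp [cycShift_apply, Pi.mulSingle_apply, sub_eq_iff_eq_add]

theorem of_inl_mulSingle (i : ZMod p) (b : B) :
    Abelianization.of (inl (φ := cycShift B p) (Pi.mulSingle i b))
      = Abelianization.of (inl (φ := cycShift B p) (Pi.mulSingle 0 b)) := by
  rw [← zero_add i, ← cycShift_mulSingle, inl_aut, map_mul, map_mul, mul_right_comm, ← map_mul,
    ← map_mul inr, mul_inv_cancel, map_one, map_one, one_mul]

variable (B p) [NeZero p]

def abelianProd : (ZMod p → B) →* Abelianization B :=
  ∏ i : ZMod p, Abelianization.of.comp (Pi.evalMonoidHom (fun _ => B) i)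

variable {B p}

theorem abelianProd_apply (f : ZMod p → B) :
    abelianProd B p f = ∏ i, Abelianization.of (f i) := by
  simp [abelianProd]

theorem abelianProd_eq_of_list_prod (f : ZMod p → B) :
    abelianProd B p f = Abelianization.of ((List.range p).map fun i => f (i : ZMod p)).prod := by
  rw [map_list_prod, List.map_map, abelianProd_apply]
  exact (ZMod.list_prod_map_range _).symm

theorem abelianProd_mulSingle (i : ZMod p) (b : B) :
    abelianProd B p (Pi.mulSingle i b) = Abelianization.of b := by
  simp [abelianProd_apply, Pi.mulSingle_apply, apply_ite]

theorem abelianProd_cycShift (k : Multiplicative (ZMod p)) (f : ZMod p → B) :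
    abelianProd B p (cycShift B p k f) = abelianProd B p f := by
  simp only [abelianProd_apply, cycShift_apply]
  exact (Equiv.subRight _).prod_comp fun j => Abelianization.of (f j)

variable (B p)

def toAbelianization : Wr B p →* Abelianization B :=
  lift (abelianProd B p) 1 fun k => by ext f; simp [abelianProd_cycShift]

def abelianizationMapSingle : Abelianization B →* Abelianization (Wr B p) :=
  Abelianization.map (inl.comp (MonoidHom.mulSingle (fun _ : ZMod p => B) 0))

variable {B p}

theorem leftInverse_abelianizationMapSingle :
    Function.LeftInverse (Abelianization.lift (toAbelianization B p))
      (abelianizationMapSingle B p) := by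
  have : (Abelianization.lift (toAbelianization B p)).comp (abelianizationMapSingle B p)
      = MonoidHom.id _ :=
    Abelianization.hom_ext _ _ <| MonoidHom.ext fun b => by
      simp [abelianizationMapSingle, toAbelianization, abelianProd_mulSingle]
  exact DFunLike.congr_fun this

theorem of_inl (f : ZMod p → B) :
    Abelianization.of (inl (φ := cycShift B p) f)
      = abelianizationMapSingle B p (abelianProd B p f) := by
  have : Abelianization.of.comp (inl (φ := cycShift B p))
      = (abelianizationMapSingle B p).comp (abelianProd B p) :=
    MonoidHom.pi_ext fun i b => by
      simp [of_inl_mulSingle i b, abelianProd_mulSingle, abelianizationMapSingle]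
  exact DFunLike.congr_fun this f

end Wr

/-- An element `(r 0, …, r (p-1))` of the base group `B^p` of the wreath
product `W = B ≀ C_p` lies in the commutator subgroup of `W` iff the product
`r 0 * r 1 * ⋯ * r (p-1)` lies in the commutator subgroup of `B`. -/
theorem base_mem_commutator_iff (B : Type*) [Group B] (p : ℕ) (hp : 2 ≤ p)
    (r : ZMod p → B) :
    SemidirectProduct.inl (φ := cycShift B p) r ∈ commutator (Wr B p) ↔
      ((List.range p).map fun i => r (i : ZMod p)).prod ∈ commutator B := by
  have : NeZero p := ⟨by omega⟩
  rw [← Abelianization.of_eq_one_iff, ← Abelianization.of_eq_one_iff, Wr.of_inl,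
    Wr.abelianProd_eq_of_list_prod,
    map_eq_one_iff _ Wr.leftInverse_abelianizationMapSingle.injective]
end

section
/- For any prime p and integer k ≥ 2, the commutator width of a Sylow p-subgroup of the symmetric group S_{p^k} equals 1. -/
/-!
Mathlib identifies every Sylow `p`-subgroup of `S_{p^k}` with the iterated wreath product of `k`
copies of `C_p`, so it suffices to show that `D ≀ C_n` has commutator width at most one whenever
`D` does. An element `g` of `[D ≀ C_n, D ≀ C_n]` has trivial top component, and the ordered product
of its coordinates `b 0, …, b (n-1)` lies in `[D, D]`, hence is a commutator `⁅c, y⁆`. Taking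
`τ x` to be the partial product of `b` up to `x` (times `y`) and `α` to be `c` at `-1` and `1`
elsewhere, `g = ⁅(α, σ⁻¹), (τ, 1)⁆` for a generator `σ` of `C_n`. Non-triviality for `k ≥ 2` holds
because a wreath product of two non-trivial groups is non-abelian.
-/

open scoped commutatorElement
open Finset

theorem map_commutator_of_surjective {G H : Type*} [Group G] [Group H] {f : G →* H}
    (hf : Function.Surjective f) : (commutator G).map f = commutator H := by
  rw [map_commutator_eq, f.range_eq_top_of_surjective hf, commutator_def]

theorem commutator_subset_commutatorSet_of_surjective {G H : Type*} [Group G] [Group H]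
    {f : G →* H} (hf : Function.Surjective f)
    (hG : (commutator G : Set G) ⊆ commutatorSet G) :
    (commutator H : Set H) ⊆ commutatorSet H := by
  intro h hh
  rw [← map_commutator_of_surjective hf] at hh
  obtain ⟨g, hg, rfl⟩ := hh
  obtain ⟨a, b, rfl⟩ := hG hg
  exact ⟨f a, f b, (map_commutatorElement f a b).symm⟩

theorem commutator_ne_bot_of_surjective {G H : Type*} [Group G] [Group H] {f : G →* H}
    (hf : Function.Surjective f) (hH : commutator H ≠ ⊥) : commutator G ≠ ⊥ := by
  intro hG
  rw [← map_commutator_of_surjective hf, hG, Subgroup.map_bot] at hH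
  exact hH rfl

def descProd {M : Type*} [Monoid M] (f : ℕ → M) : ℕ → M
  | 0 => 1
  | m + 1 => f m * descProd f m

theorem map_descProd {M N : Type*} [Monoid M] [CommMonoid N] (φ : M →* N) (f : ℕ → M) (m : ℕ) :
    φ (descProd f m) = ∏ i ∈ range m, φ (f i) := by
  induction m with
  | zero => simp [descProd]
  | succ m ih => rw [descProd, map_mul, ih, prod_range_succ, mul_comm]

namespace ZMod

variable {n : ℕ} [NeZero n]

theorem prod_eq_prod_range {M : Type*} [CommMonoid M] (F : ZMod n → M) :
    ∏ x, F x = ∏ i ∈ range n, F i :=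
  prod_nbij' val (↑) (fun x _ => mem_range.2 x.val_lt) (fun _ _ => mem_univ _)
    (fun x _ => natCast_zmod_val x) (fun _ hi => val_cast_of_lt (mem_range.1 hi))
    (fun x _ => by rw [natCast_zmod_val])

theorem val_add_one_of_add_one_ne_zero {x : ZMod n} (hx : x + 1 ≠ 0) :
    (x + 1).val = x.val + 1 := by
  have hcast : x + 1 = ((x.val + 1 : ℕ) : ZMod n) := by push_cast [natCast_zmod_val]; rfl
  rw [hcast, val_cast_of_lt]
  refine lt_of_le_of_ne x.val_lt (fun h => hx ?_)
  rw [hcast, h, natCast_self]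

theorem val_add_one_of_add_one_eq_zero {x : ZMod n} (hx : x + 1 = 0) : x.val + 1 = n := by
  have hdvd : n ∣ x.val + 1 := by
    rw [← natCast_eq_zero_iff]; push_cast [natCast_zmod_val]; exact hx
  exact le_antisymm x.val_lt (Nat.le_of_dvd x.val.succ_pos hdvd)

theorem exists_eq_mul_shift_mul_inv {D : Type*} [Group D] (b : ZMod n → D)
    (hb : descProd (fun i => b i) n ∈ commutatorSet D) :
    ∃ α τ : ZMod n → D, ∀ x, b x = α x * τ (x + 1) * (α x)⁻¹ * (τ x)⁻¹ := by
  obtain ⟨c, y, hcy⟩ := hb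
  refine ⟨fun x => if x + 1 = 0 then c else 1, fun x => descProd (fun i => b i) x.val * y,
    fun x => ?_⟩
  by_cases hx : x + 1 = 0
  · have hlast : descProd (fun i => b i) (x.val + 1) = b x * descProd (fun i => b i) x.val := by
      rw [descProd, natCast_zmod_val]
    rw [val_add_one_of_add_one_eq_zero hx, ← hcy] at hlast
    simp only [hx, ↓reduceIte, val_zero, descProd, one_mul]
    rw [eq_mul_inv_iff_mul_eq.2 hlast.symm, commutatorElement_def]
    group
  · simp only [if_neg hx, val_add_one_of_add_one_ne_zero hx, descProd, natCast_zmod_val]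
    group

end ZMod

namespace RegularWreathProduct

variable {D Q : Type*} [Group D] [Group Q]

theorem commutatorElement_mk_one (α τ : Q → D) (s : Q) :
    ⁅(⟨α, s⟩ : D ≀ᵣ Q), (⟨τ, 1⟩ : D ≀ᵣ Q)⁆ =
      (⟨fun x => α x * τ (s⁻¹ * x) * (α x)⁻¹ * (τ x)⁻¹, 1⟩ : D ≀ᵣ Q) := by
  ext x
  · simp [commutatorElement_def, mul_assoc]
  · simp [commutatorElement_def]

instance [Nontrivial Q] : Nontrivial (D ≀ᵣ Q) :=
  Function.LeftInverse.injective (g := (rightHom : D ≀ᵣ Q →* Q)) (f := inl) (fun _ => rfl)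
    |>.nontrivial

theorem commutator_ne_bot [Nontrivial D] [Nontrivial Q] : commutator (D ≀ᵣ Q) ≠ ⊥ := by
  classical
  obtain ⟨d, hd⟩ := exists_ne (1 : D)
  obtain ⟨q, hq⟩ := exists_ne (1 : Q)
  intro hbot
  have hcomm : ⁅(⟨1, q⟩ : D ≀ᵣ Q), (⟨Pi.mulSingle 1 d, 1⟩ : D ≀ᵣ Q)⁆ = 1 := by
    rw [← Subgroup.mem_bot, ← hbot]
    exact Subgroup.commutator_mem_commutator (Subgroup.mem_top _) (Subgroup.mem_top _)
  have h1 := congrFun (congrArg left hcomm) 1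
  rw [commutatorElement_mk_one] at h1
  exact hd (by simpa [hq] using h1)

def leftProdHom [Fintype Q] : D ≀ᵣ Q →* Abelianization D where
  toFun w := ∏ x, Abelianization.of (w.left x)
  map_one' := by simp
  map_mul' v w := by
    simp only [mul_left, Pi.mul_apply, map_mul, Finset.prod_mul_distrib]
    congr 1
    exact Fintype.prod_equiv (Equiv.mulLeft v.right⁻¹) _ _ fun _ => rfl

end RegularWreathProduct

namespace RegularWreathProduct

variable {D Q : Type*} [Group D] [CommGroup Q] [Fintype Q]

theorem right_eq_one_and_leftProdHom_eq_one {g : D ≀ᵣ Q} (hg : g ∈ commutator (D ≀ᵣ Q)) :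
    g.right = 1 ∧ leftProdHom g = 1 :=
  ⟨Abelianization.commutator_subset_ker rightHom hg,
    Abelianization.commutator_subset_ker leftProdHom hg⟩

theorem commutator_subset_commutatorSet {n : ℕ} [NeZero n]
    (hD : (commutator D : Set D) ⊆ commutatorSet D) :
    (commutator (D ≀ᵣ Multiplicative (ZMod n)) : Set (D ≀ᵣ Multiplicative (ZMod n))) ⊆
      commutatorSet (D ≀ᵣ Multiplicative (ZMod n)) := by
  intro g hg
  obtain ⟨hright, hprod⟩ := right_eq_one_and_leftProdHom_eq_one hg
  set b : ZMod n → D := fun x => g.left (Multiplicative.ofAdd x)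
  have hb : descProd (fun i => b i) n ∈ commutatorSet D := by
    apply hD
    rw [SetLike.mem_coe, ← Abelianization.ker_of, MonoidHom.mem_ker, map_descProd,
      ← ZMod.prod_eq_prod_range fun x => Abelianization.of (b x)]
    exact (Fintype.prod_equiv Multiplicative.ofAdd _ _ fun _ => rfl).trans hprod
  obtain ⟨α, τ, hατ⟩ := ZMod.exists_eq_mul_shift_mul_inv b hb
  refine ⟨⟨fun x => α x.toAdd, Multiplicative.ofAdd (-1)⟩, ⟨fun x => τ x.toAdd, 1⟩, ?_⟩
  rw [commutatorElement_mk_one]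
  ext x
  · simpa [b, add_comm] using (hατ x.toAdd).symm
  · exact hright.symm

end RegularWreathProduct

theorem IteratedWreathProduct.commutator_subset_commutatorSet (n : ℕ) [NeZero n] (k : ℕ) :
    (commutator (IteratedWreathProduct (Multiplicative (ZMod n)) k) :
        Set (IteratedWreathProduct (Multiplicative (ZMod n)) k)) ⊆
      commutatorSet (IteratedWreathProduct (Multiplicative (ZMod n)) k) := by
  induction k with
  | zero => exact fun _ _ => ⟨1, 1, rfl⟩
  | succ k ih => exact RegularWreathProduct.commutator_subset_commutatorSet ih

instance IteratedWreathProduct.nontrivial (G : Type*) [Group G] [Nontrivial G] (k : ℕ) :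
    Nontrivial (IteratedWreathProduct G (k + 1)) :=
  inferInstanceAs (Nontrivial (IteratedWreathProduct G k ≀ᵣ G))

theorem IteratedWreathProduct.commutator_ne_bot (G : Type*) [Group G] [Nontrivial G] (k : ℕ) :
    commutator (IteratedWreathProduct G (k + 2)) ≠ ⊥ :=
  RegularWreathProduct.commutator_ne_bot (D := IteratedWreathProduct G (k + 1))

/-- for a prime `p` and `k ≥ 2`, the commutator width of a Sylow
`p`-subgroup of the symmetric group `S_{p^k}` equals `1`: every element of its
commutator subgroup is a single commutator, and the commutator subgroup is
nontrivial. -/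
theorem cw_sylow_symm_eq_one (p k : ℕ) [Fact p.Prime] (hk : 2 ≤ k)
    (P : Sylow p (Equiv.Perm (Fin (p ^ k)))) :
    (∀ g ∈ commutator ↥P, ∃ a b : ↥P, g = ⁅a, b⁆) ∧ commutator ↥P ≠ ⊥ := by
  let e : P ≃* IteratedWreathProduct (Multiplicative (ZMod p)) k :=
    Sylow.mulEquivIteratedWreathProduct p k (Fin (p ^ k)) (by simp) _ (by simp) P
  constructor
  · intro g hg
    obtain ⟨a, b, hab⟩ := commutator_subset_commutatorSet_of_surjective
      (f := e.symm.toMonoidHom) e.symm.surjective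
      (IteratedWreathProduct.commutator_subset_commutatorSet p k) hg
    exact ⟨a, b, hab.symm⟩
  · obtain ⟨j, rfl⟩ : ∃ j, k = j + 2 := ⟨k - 2, by omega⟩
    exact commutator_ne_bot_of_surjective (f := e.toMonoidHom) e.surjective
      (IteratedWreathProduct.commutator_ne_bot _ j)
end

section
/- For k ≥ 2, the Frattini subgroup of a Sylow 2-subgroup of A_{2^k} equals its commutator subgroup: Φ(Syl_2 A_{2^k}) = (Syl_2 A_{2^k})'. -/
/-!
Identify `Fin (2 ^ k)` with `Fin k → Bool`. The permutations that change bit `i` according to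
the bits below `i` only (Kaloujnine's triangular permutations) form a subgroup `T` of order
`2 ^ (2 ^ k - 1)`, hence a Sylow `2`-subgroup of the symmetric group, and `T ⊓ A` is a Sylow
`2`-subgroup of the alternating group `A`. An element of `T ⊓ A` is corrected bit by bit, from
bit `0` upwards, by conditional flips of a single bit. These are involutions in `T`; the flip of
a bit `i < k - 1` is even, being the product of a permutation and its conjugate by the flip of
bit `k - 1`, and the last correction is even because the product of all of them is. So `T ⊓ A`,
and with it every Sylow `2`-subgroup of `A`, is generated by involutions. In such a `2`-group
`P`, the abelianization is elementary abelian, so `Φ(P) ≤ P'`, while `P' ≤ Φ(P)` holds in every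
finite `p`-group because maximal subgroups are normal of prime index.
-/

open Equiv Function Subgroup

section Frattini

variable {G : Type*} [Group G]

theorem commutator_le_of_isCoatom [Finite G] {p : ℕ} [Fact p.Prime] (hG : IsPGroup p G)
    {M : Subgroup G} (hM : IsCoatom M) : commutator G ≤ M := by
  have : Group.IsNilpotent G := hG.isNilpotent
  have : M.Normal := Group.normalizerCondition_of_isNilpotent.normal_of_coatom M hM
  set Z := (center (G ⧸ M)).comap (QuotientGroup.mk' M)
  have hMZ : M ≤ Z := fun m hm => by
    simp [Z, (QuotientGroup.eq_one_iff m).mpr hm, one_mem]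
  -- `Z ≠ M` because the nontrivial `p`-group `G ⧸ M` has a nontrivial centre
  have hZ : Z = ⊤ := by
    refine hMZ.lt_or_eq.elim (hM.2 Z) fun hMZ => ?_
    have : Nontrivial (G ⧸ M) := QuotientGroup.nontrivial_iff.mpr hM.1
    have := (hG.to_quotient M).center_nontrivial
    obtain ⟨⟨z, hz⟩, hz1⟩ := exists_ne (1 : center (G ⧸ M))
    obtain ⟨g, rfl⟩ := QuotientGroup.mk_surjective z
    exact absurd (Subtype.ext ((QuotientGroup.eq_one_iff g).mpr (hMZ ▸ hz))) hz1
  rw [_root_.commutator_def, commutator_le]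
  intro a _ b _
  have ha : a ∈ Z := hZ ▸ mem_top a
  rw [← QuotientGroup.eq_one_iff, ← QuotientGroup.mk'_apply, map_commutatorElement,
    commutatorElement_eq_one_iff_commute]
  exact (mem_center_iff.mp ha _).symm

theorem commutator_le_frattini [Finite G] {p : ℕ} [Fact p.Prime] (hG : IsPGroup p G) :
    commutator G ≤ frattini G :=
  le_iInf₂ fun _ => commutator_le_of_isCoatom hG

theorem frattini_eq_bot_of_sq_eq_one {E : Type*} [CommGroup E] (hE : ∀ x : E, x ^ 2 = 1) :
    frattini E = ⊥ := by
  let _ : Module (ZMod 2) (Additive E) :=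
    AddCommGroup.zmodModule fun x => by
      rw [← ofMul_toMul x, ← ofMul_pow, hE, ofMul_one]
  refine eq_bot_iff.mpr fun x hx => ?_
  by_contra hx1
  obtain ⟨f, hf⟩ := Module.Projective.exists_dual_ne_zero (ZMod 2)
    (show Additive.ofMul x ≠ 0 from hx1)
  have hK : IsCoatom (LinearMap.ker f) := LinearMap.isCoatom_ker_of_surjective
    (LinearMap.surjective_of_ne_zero fun h => hf (by simp [h]))
  let e : Subgroup E ≃o Submodule (ZMod 2) (Additive E) :=
    Subgroup.toAddSubgroup.trans (AddSubgroup.toZModSubmodule 2)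
  exact hf (frattini_le_coatom ((e.symm.isCoatom_iff _).mpr hK) hx)

theorem Abelianization.sq_eq_one (hG : closure {g : G | g ^ 2 = 1} = ⊤) (x : Abelianization G) :
    x ^ 2 = 1 := by
  obtain ⟨g, rfl⟩ := QuotientGroup.mk_surjective x
  have : closure {g : G | g ^ 2 = 1} ≤ ((powMonoidHom 2).comp Abelianization.of).ker :=
    closure_le _ |>.mpr fun g hg => by simp [← map_pow, hg.out]
  exact this (hG ▸ mem_top g)

theorem frattini_le_commutator (hG : closure {g : G | g ^ 2 = 1} = ⊤) :
    frattini G ≤ commutator G := by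
  have h := frattini_le_comap_frattini_of_surjective (φ := Abelianization.of (G := G))
    QuotientGroup.mk_surjective
  rwa [frattini_eq_bot_of_sq_eq_one (Abelianization.sq_eq_one hG), MonoidHom.comap_bot,
    Abelianization.ker_of] at h

theorem frattini_eq_commutator_of_closure_sq_eq_one [Finite G] (h2 : IsPGroup 2 G)
    (hG : closure {g : G | g ^ 2 = 1} = ⊤) : frattini G = commutator G :=
  (frattini_le_commutator hG).antisymm (commutator_le_frattini h2)

end Frattini

section Involutions

variable {G H : Type*} [Group G] [Group H]

theorem closure_sq_eq_one_eq_top_of_surjective {f : G →* H} (hf : Surjective f)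
    (hG : closure {g : G | g ^ 2 = 1} = ⊤) : closure {h : H | h ^ 2 = 1} = ⊤ := by
  refine eq_top_iff.mpr ?_
  calc ⊤ = (closure {g : G | g ^ 2 = 1}).map f := by
        rw [hG, ← MonoidHom.range_eq_map, MonoidHom.range_eq_top_of_surjective f hf]
    _ = closure (f '' {g : G | g ^ 2 = 1}) := MonoidHom.map_closure f _
    _ ≤ closure {h : H | h ^ 2 = 1} := closure_mono <| by
        rintro _ ⟨g, hg, rfl⟩
        simp [← map_pow, hg.out]

theorem closure_sq_eq_one_eq_top_of_injective {f : H →* G} (hf : Injective f)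
    (hrange : f.range ≤ closure {g | g ∈ f.range ∧ g ^ 2 = 1}) :
    closure {h : H | h ^ 2 = 1} = ⊤ := by
  refine eq_top_iff.mpr <| (map_le_map_iff_of_injective hf).mp ?_
  rw [← MonoidHom.range_eq_map, MonoidHom.map_closure]
  refine hrange.trans (closure_mono ?_)
  rintro _ ⟨⟨h, rfl⟩, hh⟩
  exact ⟨h, hf (by simpa using hh), rfl⟩

end Involutions

section Sylow

variable {G : Type*} [Group G] [Finite G]

theorem Subgroup.relIndex_dvd_index_of_normal_right (H N : Subgroup G) [N.Normal] :
    H.relIndex N ∣ H.index := by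
  obtain ⟨c, hc⟩ := N.relIndex_dvd_index_of_normal H
  have h₁ : H.relIndex N * N.index = (H ⊓ N).index := by
    rw [← inf_relIndex_right, relIndex_mul_index inf_le_right]
  have h₂ : N.relIndex H * H.index = (H ⊓ N).index := by
    rw [← inf_relIndex_right N H, relIndex_mul_index inf_le_right, inf_comm]
  have hpos : 0 < N.relIndex H := Nat.pos_of_ne_zero (N.subgroupOf H).index_ne_zero_of_finite
  refine ⟨c, Nat.eq_of_mul_eq_mul_left hpos ?_⟩
  rw [h₂, ← h₁, hc]
  ring

def Sylow.subgroupOfNormal {p : ℕ} [Fact p.Prime] (S : Sylow p G) (N : Subgroup G) [N.Normal] :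
    Sylow p N :=
  S.isPGroup'.comap_subtype.toSylow fun h =>
    S.not_dvd_index (h.trans ((S : Subgroup G).relIndex_dvd_index_of_normal_right N))

end Sylow

section FlipIf

variable {ι : Type*} [DecidableEq ι]

/-- Reading `c` at `x` with bit `i` cleared makes `flipIf i c` an involution for every `c`. -/
def flipIf (i : ι) (c : (ι → Bool) → Bool) : Perm (ι → Bool) :=
  Involutive.toPerm (fun x => update x i (x i ^^ c (update x i false))) fun x => by simp

theorem flipIf_apply (i : ι) (c : (ι → Bool) → Bool) (x : ι → Bool) :
    flipIf i c x = update x i (x i ^^ c (update x i false)) := rfl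

@[simp]
theorem flipIf_apply_self (i : ι) (c : (ι → Bool) → Bool) (x : ι → Bool) :
    flipIf i c x i = (x i ^^ c (update x i false)) := by
  simp [flipIf_apply]

theorem flipIf_apply_of_ne {i j : ι} (h : j ≠ i) (c : (ι → Bool) → Bool) (x : ι → Bool) :
    flipIf i c x j = x j := by
  simp [flipIf_apply, h]

theorem flipIf_mul (i : ι) (c d : (ι → Bool) → Bool) :
    flipIf i c * flipIf i d = flipIf i fun y => c y ^^ d y := by
  ext x : 1
  simp only [Perm.mul_apply, flipIf_apply, update_idem, update_self]
  rw [Bool.xor_assoc, Bool.xor_comm (d _)]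

theorem flipIf_mul_self (i : ι) (c : (ι → Bool) → Bool) : flipIf i c * flipIf i c = 1 :=
  Perm.ext (flipIf i c).left_inv

theorem flipIf_conj {i j : ι} (hij : i ≠ j) (c : (ι → Bool) → Bool) :
    flipIf j (fun _ => true) * flipIf i c * flipIf j (fun _ => true) =
      flipIf i (c ∘ flipIf j fun _ => true) := by
  ext x l : 2
  simp only [Perm.mul_apply, flipIf_apply, comp_apply]
  by_cases hl : l = i
  · subst hl
    simp [hij, update_comm hij, update_of_ne hij.symm]
  · by_cases hl' : l = j <;> simp_all [update_apply]

theorem sign_flipIf [Fintype ι] {i j : ι} (hij : i ≠ j) {c : (ι → Bool) → Bool}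
    (hc : ∀ x, c (flipIf j (fun _ => true) x) = c x) : Perm.sign (flipIf i c) = 1 := by
  set τ := flipIf j fun _ => true
  set c₀ : (ι → Bool) → Bool := fun y => c y && !y j
  have hsplit : flipIf i c = flipIf i c₀ * (τ * flipIf i c₀ * τ) := by
    rw [flipIf_conj hij, flipIf_mul]
    congr 1
    funext y
    simp only [c₀, comp_apply, hc, τ, flipIf_apply_self]
    cases c y <;> cases y j <;> rfl
  rw [hsplit, map_mul, map_mul, map_mul, mul_comm (Perm.sign τ), mul_assoc, Int.units_mul_self,
    mul_one, Int.units_mul_self]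

end FlipIf

section Triangular

variable {k : ℕ}

def AgreeBelow (n : ℕ) (x y : Fin k → Bool) : Prop :=
  ∀ j : Fin k, (j : ℕ) < n → x j = y j

theorem agreeBelow_succ {n : ℕ} {x y : Fin k → Bool} :
    AgreeBelow (n + 1) x y ↔ AgreeBelow n x y ∧ ∀ j : Fin k, (j : ℕ) = n → x j = y j := by
  simp only [AgreeBelow, Nat.lt_succ_iff_lt_or_eq, or_imp, forall_and]

theorem AgreeBelow.eq {x y : Fin k → Bool} (h : AgreeBelow k x y) : x = y :=
  funext fun j => h j j.2

theorem AgreeBelow.trans {n : ℕ} {x y z : Fin k → Bool} (h₁ : AgreeBelow n x y)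
    (h₂ : AgreeBelow n y z) : AgreeBelow n x z :=
  fun j hj => (h₁ j hj).trans (h₂ j hj)

theorem agreeBelow_update {n : ℕ} {i : Fin k} (hi : n ≤ i) (x : Fin k → Bool) (b : Bool) :
    AgreeBelow n (update x i b) x :=
  fun j hj => update_of_ne (Fin.ne_of_lt (by omega)) _ _

def flipPattern (f : (Fin k → Bool) → Fin k → Bool) (i : Fin k) (x : Fin k → Bool) : Bool :=
  f x i ^^ x i

def IsTriangular (f : (Fin k → Bool) → Fin k → Bool) : Prop :=
  ∀ (i : Fin k) (x y : Fin k → Bool), AgreeBelow i x y → flipPattern f i x = flipPattern f i y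

theorem IsTriangular.agreeBelow_iff {f : (Fin k → Bool) → Fin k → Bool} (hf : IsTriangular f)
    {x y : Fin k → Bool} : ∀ n, AgreeBelow n (f x) (f y) ↔ AgreeBelow n x y
  | 0 => by simp [AgreeBelow]
  | n + 1 => by
    rw [agreeBelow_succ, agreeBelow_succ, hf.agreeBelow_iff n]
    refine and_congr_right fun h => forall₂_congr fun j hj => ?_
    have := hf j x y (hj ▸ h)
    revert this
    simp only [flipPattern]
    cases f x j <;> cases f y j <;> cases x j <;> cases y j <;> decide

theorem IsTriangular.injective {f : (Fin k → Bool) → Fin k → Bool} (hf : IsTriangular f) :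
    Injective f :=
  fun _ _ h => ((hf.agreeBelow_iff k).mp (h ▸ fun _ _ => rfl)).eq

def triangularSubgroup (k : ℕ) : Subgroup (Perm (Fin k → Bool)) where
  carrier := {π | IsTriangular π}
  one_mem' _ _ _ _ := by simp [flipPattern]
  mul_mem' {π τ} hπ hτ i x y h := by
    have hxor : ∀ a b c : Bool, (a ^^ c) = ((a ^^ b) ^^ (b ^^ c)) := by decide
    have hπ' := hπ i _ _ ((hτ.agreeBelow_iff i).mpr h)
    have hτ' := hτ i x y h
    simp only [flipPattern, Perm.mul_apply] at hπ' hτ' ⊢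
    rw [hxor (π (τ x) i) (τ x i), hxor (π (τ y) i) (τ y i), hπ', hτ']
  inv_mem' {π} hπ i x y h := by
    have := hπ i (π⁻¹ x) (π⁻¹ y) ((hπ.agreeBelow_iff i).mp (by simpa using h))
    simpa [flipPattern, Bool.xor_comm] using this

theorem flipIf_mem_triangularSubgroup {i : Fin k} {c : (Fin k → Bool) → Bool}
    (hc : ∀ x y, AgreeBelow i x y → c x = c y) : flipIf i c ∈ triangularSubgroup k := by
  intro j x y h
  by_cases hj : j = i
  · subst hj
    have : AgreeBelow j (update x j false) (update y j false) := fun l hl => by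
      simpa [update_of_ne (Fin.ne_of_lt hl)] using h l hl
    simp only [flipPattern, flipIf_apply_self, hc _ _ this]
    cases x j <;> cases y j <;> simp
  · simp [flipPattern, flipIf_apply_of_ne hj]

section Generation

variable {π : Perm (Fin k → Bool)} {i : Fin k}

theorem agreeBelow_succ_flipIf_flipPattern (hπ : π ∈ triangularSubgroup k)
    (hfix : ∀ x, AgreeBelow i (π x) x) (x : Fin k → Bool) :
    AgreeBelow (i + 1) (flipIf i (flipPattern π i) (π x)) x := by
  refine agreeBelow_succ.mpr ⟨fun j hj => ?_, fun j hj => ?_⟩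
  · rw [flipIf_apply_of_ne (Fin.ne_of_lt hj)]
    exact hfix x j hj
  · obtain rfl : j = i := Fin.ext hj
    have : AgreeBelow j (update (π x) j false) x := (agreeBelow_update le_rfl _ _).trans (hfix x)
    rw [flipIf_apply_self, hπ j _ x this, flipPattern]
    cases π x j <;> cases x j <;> rfl

theorem flipIf_flipPattern_mem_alternatingGroup (hπ : π ∈ triangularSubgroup k)
    (hi : (i : ℕ) + 1 < k) :
    flipIf i (flipPattern π i) ∈ alternatingGroup (Fin k → Bool) := by
  let last : Fin k := ⟨k - 1, by omega⟩
  have hlast : (i : ℕ) < last := by simp only [last]; omega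
  exact Perm.mem_alternatingGroup.mpr <| sign_flipIf (Fin.ne_of_lt hlast) fun x =>
    hπ i _ _ (agreeBelow_update hlast.le _ _)

theorem triangularSubgroup_inf_alternatingGroup_le_closure :
    triangularSubgroup k ⊓ alternatingGroup (Fin k → Bool) ≤ closure
      {σ | σ ∈ triangularSubgroup k ⊓ alternatingGroup (Fin k → Bool) ∧ σ ^ 2 = 1} := by
  set T := triangularSubgroup k ⊓ alternatingGroup (Fin k → Bool)
  suffices key : ∀ d n, n + d = k → ∀ π ∈ T, (∀ x, AgreeBelow n (π x) x) →
      π ∈ closure {σ | σ ∈ T ∧ σ ^ 2 = 1} from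
    fun π hπ => key k 0 (zero_add k) π hπ fun _ _ h => absurd h (Nat.not_lt_zero _)
  intro d
  induction d with
  | zero =>
    rintro n rfl π - hfix
    rw [show π = 1 from Perm.ext fun x => (hfix x).eq]
    exact one_mem _
  | succ d ih =>
    intro n hn π hπ hfix
    let i : Fin k := ⟨n, by omega⟩
    let σ := flipIf i (flipPattern π i)
    have hσT : σ ∈ triangularSubgroup k := flipIf_mem_triangularSubgroup (hπ.1 i)
    have hσπ : ∀ x, AgreeBelow (n + 1) ((σ * π) x) x :=
      agreeBelow_succ_flipIf_flipPattern (i := i) hπ.1 hfix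
    have hσA : σ ∈ alternatingGroup (Fin k → Bool) := by
      rcases d with _ | d
      · have hk : n + 1 = k := hn
        have : σ * π = 1 := Perm.ext fun x => (hk ▸ hσπ x).eq
        rw [eq_inv_of_mul_eq_one_left this]
        exact inv_mem hπ.2
      · exact flipIf_flipPattern_mem_alternatingGroup hπ.1 (by simp only [i]; omega)
    have hσσ : σ * σ = 1 := flipIf_mul_self _ _
    rw [show π = σ * (σ * π) by rw [← mul_assoc, hσσ, one_mul]]
    exact mul_mem (subset_closure ⟨⟨hσT, hσA⟩, by rw [sq, hσσ]⟩)
      (ih (n + 1) (by omega) _ ⟨mul_mem hσT hπ.1, mul_mem hσA hπ.2⟩ hσπ)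

end Generation

section Counting

abbrev lowBits (i : Fin k) (x : Fin k → Bool) : Fin i → Bool := Fin.take i i.isLt.le x

def extendLowBits (i : Fin k) (s : Fin i → Bool) : Fin k → Bool :=
  fun j => if h : (j : ℕ) < i then s ⟨j, h⟩ else false

theorem lowBits_extendLowBits (i : Fin k) (s : Fin i → Bool) :
    lowBits i (extendLowBits i s) = s := by
  funext j
  simp [extendLowBits, Fin.take_apply]

theorem AgreeBelow.lowBits_eq {i : Fin k} {x y : Fin k → Bool} (h : AgreeBelow i x y) :
    lowBits i x = lowBits i y :=
  funext fun j => h _ j.2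

theorem agreeBelow_extendLowBits_lowBits (i : Fin k) (x : Fin k → Bool) :
    AgreeBelow i (extendLowBits i (lowBits i x)) x := fun j hj => by
  simp [extendLowBits, hj, Fin.take_apply]

def ofPortrait (g : (i : Fin k) → (Fin i → Bool) → Bool) (x : Fin k → Bool) :
    Fin k → Bool :=
  fun i => x i ^^ g i (lowBits i x)

theorem isTriangular_ofPortrait (g : (i : Fin k) → (Fin i → Bool) → Bool) :
    IsTriangular (ofPortrait g) := fun i x y h => by
  simp only [flipPattern, ofPortrait, h.lowBits_eq]
  cases x i <;> cases y i <;> simp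

noncomputable def triangularEquivPortrait :
    triangularSubgroup k ≃ ((i : Fin k) → (Fin i → Bool) → Bool) where
  toFun π i s := flipPattern π.1 i (extendLowBits i s)
  invFun g := ⟨Equiv.ofBijective _ (isTriangular_ofPortrait g).injective.bijective_of_finite,
    isTriangular_ofPortrait g⟩
  left_inv π := by
    ext x i
    simp only [ofBijective_apply, ofPortrait]
    rw [π.2 i _ x (agreeBelow_extendLowBits_lowBits i x), flipPattern]
    cases π.1 x i <;> cases x i <;> rfl
  right_inv g := by
    funext i s
    simp only [flipPattern, ofBijective_apply, ofPortrait, lowBits_extendLowBits]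
    cases extendLowBits i s i <;> simp

theorem card_triangularSubgroup :
    Nat.card (triangularSubgroup k) = 2 ^ ∑ i ∈ Finset.range k, 2 ^ i := by
  rw [Nat.card_congr triangularEquivPortrait, Nat.card_pi, ← Fin.sum_univ_eq_sum_range,
    ← Finset.prod_pow_eq_pow_sum]
  simp

noncomputable def sylowTriangular (k : ℕ) : Sylow 2 (Perm (Fin k → Bool)) :=
  Sylow.ofCard (triangularSubgroup k) <| by
    rw [card_triangularSubgroup, Nat.card_perm, Nat.card_fun, Nat.card_fin,
      Nat.card_eq_fintype_card (α := Bool), Fintype.card_bool,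
      ← Nat.multiplicity_eq_factorization Nat.prime_two (Nat.factorial_ne_zero _),
      Nat.Prime.multiplicity_factorial_pow Nat.prime_two]

end Counting

end Triangular

theorem closure_sq_eq_one_sylowTriangular_subgroupOfNormal (k : ℕ) :
    closure {h : (sylowTriangular k).subgroupOfNormal (alternatingGroup (Fin k → Bool)) |
      h ^ 2 = 1} = ⊤ := by
  set A := alternatingGroup (Fin k → Bool)
  let f := A.subtype.comp ((sylowTriangular k).subgroupOfNormal A : Subgroup A).subtype
  have hrange : f.range = triangularSubgroup k ⊓ A := by
    rw [MonoidHom.range_comp, range_subtype]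
    exact subgroupOf_map_subtype _ _
  refine closure_sq_eq_one_eq_top_of_injective (f := f)
    (A.subtype_injective.comp Subtype.coe_injective) ?_
  rw [hrange]
  exact triangularSubgroup_inf_alternatingGroup_le_closure

theorem frattini_sylow_alt_eq_commutator_general (k : ℕ)
    (P : Sylow 2 (alternatingGroup (Fin (2 ^ k)))) :
    frattini ↥P = commutator ↥P := by
  refine frattini_eq_commutator_of_closure_sq_eq_one P.isPGroup' ?_
  let e : (Fin k → Bool) ≃ Fin (2 ^ k) := Fintype.equivFinOfCardEq (by simp)
  let Q := ((sylowTriangular k).subgroupOfNormal _).mapSurjective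
    (f := e.altCongrHom.toMonoidHom) e.altCongrHom.surjective
  refine closure_sq_eq_one_eq_top_of_surjective (f := (Q.equiv P).toMonoidHom)
    (Q.equiv P).surjective ?_
  exact closure_sq_eq_one_eq_top_of_surjective
    (e.altCongrHom.toMonoidHom.subgroupMap_surjective _)
    (closure_sq_eq_one_sylowTriangular_subgroupOfNormal k)

/-- for `k ≥ 2`, the Frattini subgroup of a Sylow 2-subgroup of the
alternating group `A_{2^k}` equals its commutator subgroup. -/
theorem frattini_sylow_alt_eq_commutator (k : ℕ) (hk : 2 ≤ k)
    (P : Sylow 2 (alternatingGroup (Fin (2 ^ k)))) :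
    frattini ↥P = commutator ↥P :=
  frattini_sylow_alt_eq_commutator_general k P
end

section
/- The order of a Sylow 2-subgroup of A_{2^k} is 2^{2^k - 2}, and the order of its commutator subgroup is 2^{2^k - k - 2}, for k ≥ 2. -/
/-!
A Sylow 2-subgroup of `S_{2^(n+1)}` is `W = D ≀ C₂` with `D` a Sylow 2-subgroup of `S_{2^n}`,
acting on two copies of `2^n` points. For `n ≥ 1` the swap of the two copies is a product of
`2^n` transpositions, so the sign of `(f, q) ∈ W` is `sign (f 1) * sign (f (-1))`, and the kernel
`K` of this character, of order `|W| / 2 = 2^(2^(n+1) - 2)`, is a Sylow 2-subgroup of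
`A_{2^(n+1)}`. The commutator subgroup of `K` consists of the `(f, 1)` with `f 1` even and
`f 1 * f (-1) ∈ [D, D]`, so `|[K, K]| = |D| / 2 * |[D, D]|`; without the parity condition the
same description gives `|[W, W]| = |D| * |[D, D]|`, whence `|[D, D]| = 2^(2^n - 1 - n)` by
induction on `n`.
-/

open Equiv
open scoped commutatorElement

section Commutator

variable {G H : Type*} [Group G] [Group H]

theorem MulEquiv.card_commutator_eq (e : G ≃* H) :
    Nat.card (commutator G) = Nat.card (commutator H) := by
  rw [← Subgroup.card_map_of_injective (f := e.toMonoidHom) e.injective, map_commutator_eq,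
    MonoidHom.range_eq_top_of_surjective _ e.surjective, ← commutator_def]

theorem Subgroup.card_commutator_eq (K : Subgroup G) :
    Nat.card (_root_.commutator K) = Nat.card (⁅K, K⁆ : Subgroup G) := by
  rw [← K.map_subtype_commutator, Subgroup.card_map_of_injective K.subtype_injective]

theorem MonoidHom.card_ker_mul_two [Finite G] {s : G →* ℤˣ} (hs : Function.Surjective s) :
    Nat.card s.ker * 2 = Nat.card G := by
  rw [← s.ker.card_mul_index, Subgroup.index_ker, s.range_eq_top_of_surjective hs,
    Subgroup.card_top, Nat.card_eq_fintype_card (α := ℤˣ), Fintype.card_units_int]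

/-- Commutators `⁅g, h⁆` with `s g = s h = -1` reduce to ones with an entry in `ker s` through
`⁅g, h⁆ = g⁻¹ ⁅g, g h⁆ g`. -/
theorem commutator_le_commutator_top_ker (s : G →* ℤˣ) :
    commutator G ≤ ⁅(⊤ : Subgroup G), s.ker⁆ := by
  have hN : (⁅(⊤ : Subgroup G), s.ker⁆).Normal := Subgroup.commutator_normal ⊤ s.ker
  rw [commutator_def, Subgroup.commutator_le]
  intro g _ h _
  rcases Int.units_eq_one_or (s h) with hh | hh
  · exact Subgroup.commutator_mem_commutator (Subgroup.mem_top g) hh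
  rcases Int.units_eq_one_or (s g) with hg | hg
  · rw [← commutatorElement_inv]
    exact inv_mem (Subgroup.commutator_mem_commutator (Subgroup.mem_top h) hg)
  have hgh : g * h ∈ s.ker := by rw [MonoidHom.mem_ker, map_mul, hg, hh]; rfl
  have hconj : ⁅g, h⁆ = g⁻¹ * ⁅g, g * h⁆ * g := by group
  rw [hconj]
  simpa using hN.conj_mem _ (Subgroup.commutator_mem_commutator (Subgroup.mem_top g) hgh) g⁻¹

end Commutator

namespace RegularWreathProduct

variable {D Q : Type*} [Group D] [Group Q]

def ofLeft : (Q → D) →* D ≀ᵣ Q where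
  toFun f := ⟨f, 1⟩
  map_one' := rfl
  map_mul' f g := by ext <;> simp

@[simp] theorem ofLeft_left (f : Q → D) : (ofLeft f).left = f := rfl
@[simp] theorem ofLeft_right (f : Q → D) : (ofLeft f).right = 1 := rfl

variable (Q) in
def prodHom [Fintype Q] {A : Type*} [CommGroup A] (χ : D →* A) : D ≀ᵣ Q →* A where
  toFun w := ∏ x, χ (w.left x)
  map_one' := by simp
  map_mul' v w := by
    simp only [mul_left, Pi.mul_apply, map_mul, Finset.prod_mul_distrib]
    exact congrArg _ (Equiv.prod_comp (Equiv.mulLeft v.right⁻¹) (fun x => χ (w.left x)))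

theorem prodHom_apply [Fintype Q] {A : Type*} [CommGroup A] (χ : D →* A) (w : D ≀ᵣ Q) :
    prodHom Q χ w = ∏ x, χ (w.left x) := rfl

theorem prodHom_surjective [Fintype Q] [DecidableEq Q] {A : Type*} [CommGroup A] {χ : D →* A}
    (hχ : Function.Surjective χ) : Function.Surjective (prodHom Q χ) := by
  intro a
  obtain ⟨d, rfl⟩ := hχ a
  refine ⟨ofLeft (Pi.mulSingle 1 d), ?_⟩
  rw [prodHom_apply, Fintype.prod_eq_single 1 fun x hx => by simp [hx]]
  simp

theorem prodHom_apply_units {A : Type*} [CommGroup A] (χ : D →* A) (w : D ≀ᵣ ℤˣ) :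
    prodHom ℤˣ χ w = χ (w.left 1) * χ (w.left (-1)) := by
  simp [prodHom_apply, UnitsInt.univ]

section Units

variable (s : D →* ℤˣ)

theorem apply_left_neg_one_of_mem_ker {w : D ≀ᵣ ℤˣ} (hw : w ∈ (prodHom ℤˣ s).ker) :
    s (w.left (-1)) = s (w.left 1) := by
  rw [eq_inv_of_mul_eq_one_right ((prodHom_apply_units s w).symm.trans hw),
    Int.units_inv_eq_self]

def firstCoordHom : (prodHom ℤˣ s).ker →* ℤˣ where
  toFun w := s (w.1.left 1)
  map_one' := by simp
  map_mul' v w := by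
    rcases Int.units_eq_one_or v.1.right with h | h <;>
      simp only [Subgroup.coe_mul, mul_left, Pi.mul_apply, h, map_mul, inv_one, one_mul]
    rw [Int.units_inv_eq_self, mul_one, apply_left_neg_one_of_mem_ker s w.2]

theorem ofLeft_mulSingle_mem_commutator_ker {c : D} (hc : c ∈ ⁅(⊤ : Subgroup D), s.ker⁆) :
    ofLeft (Pi.mulSingle (-1) c) ∈ ⁅(prodHom ℤˣ s).ker, (prodHom ℤˣ s).ker⁆ := by
  let single : D →* D ≀ᵣ ℤˣ :=
    (ofLeft : (ℤˣ → D) →* D ≀ᵣ ℤˣ).comp (MonoidHom.mulSingle (fun _ : ℤˣ => D) (-1))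
  suffices ⁅(⊤ : Subgroup D), s.ker⁆ ≤
      ⁅(prodHom ℤˣ s).ker, (prodHom ℤˣ s).ker⁆.comap single from this hc
  rw [Subgroup.commutator_le]
  intro g _ u hu
  have hconst : ofLeft (fun _ : ℤˣ => g) ∈ (prodHom ℤˣ s).ker := by
    simp [prodHom_apply_units, Int.units_mul_self]
  have hu' : single u ∈ (prodHom ℤˣ s).ker := by
    simpa [single, prodHom_apply_units] using hu
  have hcomm : single ⁅g, u⁆ = ⁅ofLeft (fun _ : ℤˣ => g), single u⁆ := by
    ext x
    · rcases Int.units_eq_one_or x with rfl | rfl <;> simp [single, commutatorElement_def]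
    · simp [single, commutatorElement_def]
  rw [Subgroup.mem_comap, hcomm]
  exact Subgroup.commutator_mem_commutator hconst hu'

theorem mem_commutator_ker_prodHom_iff (w : D ≀ᵣ ℤˣ) :
    w ∈ ⁅(prodHom ℤˣ s).ker, (prodHom ℤˣ s).ker⁆ ↔
      w.right = 1 ∧ w.left 1 ∈ s.ker ∧ w.left 1 * w.left (-1) ∈ commutator D := by
  set K := (prodHom ℤˣ s).ker
  constructor
  · intro hw
    have hW : w ∈ commutator (D ≀ᵣ ℤˣ) := Subgroup.commutator_mono le_top le_top hw
    rw [← K.map_subtype_commutator] at hw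
    obtain ⟨v, hv, rfl⟩ := hw
    refine ⟨Abelianization.commutator_subset_ker rightHom hW,
      Abelianization.commutator_subset_ker (firstCoordHom s) hv, ?_⟩
    have h := Abelianization.commutator_subset_ker (prodHom ℤˣ Abelianization.of) hW
    rwa [MonoidHom.mem_ker, prodHom_apply_units, ← map_mul, ← MonoidHom.mem_ker,
      Abelianization.ker_of] at h
  · rintro ⟨hr, ha, hab⟩
    have hdecomp :
        w = ⁅ofLeft (Pi.mulSingle (1 : ℤˣ) (w.left 1)), (inl (-1) : D ≀ᵣ ℤˣ)⁆ *
          ofLeft (Pi.mulSingle (-1) (w.left 1 * w.left (-1))) := by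
      ext x
      · rcases Int.units_eq_one_or x with rfl | rfl <;> simp [commutatorElement_def]
      · simp [hr, commutatorElement_def]
    have hfst : ofLeft (Pi.mulSingle 1 (w.left 1)) ∈ K := by
      simpa [K, prodHom_apply_units] using ha
    have htop : (inl (-1) : D ≀ᵣ ℤˣ) ∈ K := by simp [K, prodHom_apply_units]
    rw [hdecomp]
    exact mul_mem (Subgroup.commutator_mem_commutator hfst htop)
      (ofLeft_mulSingle_mem_commutator_ker s (commutator_le_commutator_top_ker s hab))

theorem card_commutator_ker_prodHom :
    Nat.card (⁅(prodHom ℤˣ s).ker, (prodHom ℤˣ s).ker⁆ : Subgroup (D ≀ᵣ ℤˣ)) =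
      Nat.card s.ker * Nat.card (commutator D) := by
  let e :
      (⁅(prodHom ℤˣ s).ker, (prodHom ℤˣ s).ker⁆ : Subgroup (D ≀ᵣ ℤˣ)) ≃ s.ker × commutator D :=
    { toFun w :=
        have hw := (mem_commutator_ker_prodHom_iff s w).1 w.2
        (⟨w.1.left 1, hw.2.1⟩, ⟨w.1.left 1 * w.1.left (-1), hw.2.2⟩)
      invFun p := ⟨⟨fun x => if x = 1 then p.1 else p.1⁻¹ * p.2, 1⟩,
        (mem_commutator_ker_prodHom_iff s _).2 ⟨rfl, by simp, by simp⟩⟩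
      left_inv w := by
        have hr := ((mem_commutator_ker_prodHom_iff s w).1 w.2).1
        ext x
        · rcases Int.units_eq_one_or x with rfl | rfl <;> simp
        · simp [hr]
      right_inv p := by ext <;> simp }
  rw [Nat.card_congr e, Nat.card_prod]

end Units

variable (D) in
theorem card_commutator :
    Nat.card (commutator (D ≀ᵣ ℤˣ)) = Nat.card D * Nat.card (commutator D) := by
  have h := card_commutator_ker_prodHom (1 : D →* ℤˣ)
  have h1 : prodHom ℤˣ (1 : D →* ℤˣ) = 1 := by ext; simp [prodHom_apply]
  rwa [h1, MonoidHom.ker_one, MonoidHom.ker_one, ← commutator_def, Subgroup.card_top] at h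

section Sign

variable (D Q) (Λ : Type*) [MulAction D Λ] [Fintype Λ] [DecidableEq Λ]
  [Fintype Q] [DecidableEq Q]

theorem sign_toPerm (w : D ≀ᵣ Q) :
    Perm.sign (toPerm D Q Λ w) = prodHom Q (Perm.sign.comp (MulAction.toPermHom D Λ)) w *
      Perm.sign (MulAction.toPerm w.right : Perm Q) ^ Fintype.card Λ := by
  have h : toPerm D Q Λ w = prodCongrLeft (fun x => MulAction.toPerm (w.left x)) *
      prodCongrRight (fun _ => MulAction.toPerm w.right) := by
    ext ⟨l, x⟩ <;> rfl
  rw [h, map_mul, Perm.sign_prodCongrLeft, Perm.sign_prodCongrRight, Finset.prod_const,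
    Finset.card_univ, prodHom_apply]
  rfl

theorem sign_toPerm_of_even (hΛ : Even (Fintype.card Λ)) (w : D ≀ᵣ Q) :
    Perm.sign (toPerm D Q Λ w) = prodHom Q (Perm.sign.comp (MulAction.toPermHom D Λ)) w := by
  obtain ⟨m, hm⟩ := hΛ
  rw [sign_toPerm, hm, ← two_mul, pow_mul, Int.units_sq, one_pow, mul_one]

end Sign

end RegularWreathProduct

section Sylow

variable {G H : Type*} [Group G] [Group H] [Finite G] {p : ℕ} [Fact p.Prime]

noncomputable def Sylow.mulEquivOfInjective (P : Sylow p G) {f : H →* G}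
    (hf : Function.Injective f) (hcard : Nat.card H = p ^ (Nat.card G).factorization p) :
    P ≃* H :=
  (P.equiv (Sylow.ofCard f.range
      (by rw [← hcard]; exact Nat.card_congr (MonoidHom.ofInjective hf).toEquiv.symm))).trans
    (MonoidHom.ofInjective hf).symm

end Sylow

section SymmetricGroup

variable {α : Type*} [Fintype α] [DecidableEq α]

theorem factorization_two_card_perm_eq_succ [Nontrivial α] :
    (Nat.card (Perm α)).factorization 2 =
      (Nat.card (alternatingGroup α)).factorization 2 + 1 := by
  rw [Nat.card_eq_fintype_card, ← two_mul_card_alternatingGroup, ← Nat.card_eq_fintype_card,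
    Nat.factorization_mul two_ne_zero Nat.card_pos.ne', Finsupp.add_apply,
    Nat.prime_two.factorization_self, add_comm]

theorem Sylow.surjective_sign_comp_subtype [Nontrivial α] (P : Sylow 2 (Perm α)) :
    Function.Surjective (Perm.sign.comp P.toSubgroup.subtype) := by
  obtain ⟨σ, hσP, hσ⟩ : ∃ σ ∈ P, Perm.sign σ = -1 := by
    by_contra! hP
    have hle : (P : Subgroup (Perm α)) ≤ alternatingGroup α := fun σ hσ =>
      (Int.units_eq_one_or _).resolve_right (hP σ hσ)
    have hdvd := Subgroup.card_dvd_of_le hle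
    rw [P.card_eq_multiplicity, factorization_two_card_perm_eq_succ] at hdvd
    exact Nat.pow_succ_factorization_not_dvd Nat.card_pos.ne' Nat.prime_two hdvd
  intro u
  rcases Int.units_eq_one_or u with rfl | rfl
  · exact ⟨1, map_one _⟩
  · exact ⟨⟨σ, hσP⟩, hσ⟩

theorem factorization_card_perm_two_pow (n : ℕ) :
    (Nat.card (Perm (Fin (2 ^ n)))).factorization 2 = 2 ^ n - 1 := by
  rw [Nat.card_perm, Nat.card_fin, ← Nat.multiplicity_eq_factorization Nat.prime_two
    (Nat.factorial_ne_zero _), Nat.prime_two.multiplicity_factorial_pow,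
    Nat.geomSum_eq le_rfl, Nat.div_one]

theorem card_sylow_perm_two_pow {n : ℕ} (D : Sylow 2 (Perm (Fin (2 ^ n)))) :
    Nat.card D = 2 ^ (2 ^ n - 1) := by
  rw [D.card_eq_multiplicity, factorization_card_perm_two_pow]

end SymmetricGroup

section Wreath

open RegularWreathProduct

variable {n : ℕ}

/-- Any bijection `Fin (2 ^ n) × ℤˣ ≃ Fin (2 ^ (n + 1))` will do: only injectivity and signs
are used. -/
noncomputable def wreathToPerm (D : Subgroup (Perm (Fin (2 ^ n)))) :
    D ≀ᵣ ℤˣ →* Perm (Fin (2 ^ (n + 1))) :=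
  (permCongrHom (Fintype.equivFinOfCardEq (by simp [pow_succ]))).toMonoidHom.comp
    (toPerm D ℤˣ (Fin (2 ^ n)))

theorem wreathToPerm_injective (D : Subgroup (Perm (Fin (2 ^ n)))) :
    Function.Injective (wreathToPerm D) :=
  (permCongrHom _).injective.comp (toPermInj D ℤˣ (Fin (2 ^ n)))

theorem sign_wreathToPerm (hn : 1 ≤ n) (D : Subgroup (Perm (Fin (2 ^ n)))) (w : D ≀ᵣ ℤˣ) :
    Perm.sign (wreathToPerm D w) = prodHom ℤˣ (Perm.sign.comp D.subtype) w := by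
  rw [wreathToPerm, MonoidHom.comp_apply, MulEquiv.coe_toMonoidHom, permCongrHom_coe,
    Perm.sign_permCongr, sign_toPerm_of_even]
  · rfl
  · rw [Fintype.card_fin]
    exact (Nat.even_pow' (by omega)).2 even_two

theorem card_wreath_sylow_perm (D : Sylow 2 (Perm (Fin (2 ^ n)))) :
    Nat.card (D ≀ᵣ ℤˣ) = 2 ^ (2 ^ (n + 1) - 1) := by
  rw [RegularWreathProduct.card, card_sylow_perm_two_pow, Nat.card_eq_fintype_card (α := ℤˣ),
    Fintype.card_units_int, ← pow_mul, ← pow_succ]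
  congr 1
  have : 1 ≤ 2 ^ n := Nat.one_le_two_pow
  rw [pow_succ]
  omega

theorem card_commutator_sylow_perm :
    ∀ n (D : Sylow 2 (Perm (Fin (2 ^ n)))), Nat.card (commutator D) = 2 ^ (2 ^ n - 1 - n)
  | 0, D => by
    have : Subsingleton (Perm (Fin (2 ^ 0))) := inferInstanceAs (Subsingleton (Perm (Fin 1)))
    simp
  | n + 1, D' => by
    obtain ⟨D⟩ : Nonempty (Sylow 2 (Perm (Fin (2 ^ n)))) := inferInstance
    let e : D' ≃* D ≀ᵣ ℤˣ := D'.mulEquivOfInjective (wreathToPerm_injective D.toSubgroup)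
      (by rw [card_wreath_sylow_perm, factorization_card_perm_two_pow])
    rw [e.card_commutator_eq, card_commutator, card_sylow_perm_two_pow,
      card_commutator_sylow_perm n D, ← pow_add]
    congr 1
    have : n + 1 ≤ 2 ^ n := Nat.lt_two_pow_self
    rw [pow_succ]
    omega

theorem card_ker_sign_sylow_perm (hn : 1 ≤ n) (D : Sylow 2 (Perm (Fin (2 ^ n)))) :
    Nat.card (Perm.sign.comp D.toSubgroup.subtype).ker = 2 ^ (2 ^ n - 2) := by
  have : Nontrivial (Fin (2 ^ n)) := Fin.nontrivial_iff_two_le.2 (Nat.le_pow hn)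
  refine Nat.eq_of_mul_eq_mul_right two_pos ?_
  rw [MonoidHom.card_ker_mul_two D.surjective_sign_comp_subtype, card_sylow_perm_two_pow,
    ← pow_succ]
  congr 1
  have : 2 ≤ 2 ^ n := Nat.le_pow hn
  omega

theorem card_ker_prodHom_sign_sylow_perm (hn : 1 ≤ n) (D : Sylow 2 (Perm (Fin (2 ^ n)))) :
    Nat.card (prodHom ℤˣ (Perm.sign.comp D.toSubgroup.subtype)).ker =
      2 ^ (2 ^ (n + 1) - 2) := by
  have : Nontrivial (Fin (2 ^ n)) := Fin.nontrivial_iff_two_le.2 (Nat.le_pow hn)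
  refine Nat.eq_of_mul_eq_mul_right two_pos ?_
  rw [MonoidHom.card_ker_mul_two (prodHom_surjective D.surjective_sign_comp_subtype),
    card_wreath_sylow_perm, ← pow_succ]
  congr 1
  have : 2 ≤ 2 ^ n := Nat.le_pow hn
  rw [pow_succ]
  omega

noncomputable def Sylow.mulEquivKerProdHomSign (hn : 1 ≤ n) (D : Sylow 2 (Perm (Fin (2 ^ n))))
    (P : Sylow 2 (alternatingGroup (Fin (2 ^ (n + 1))))) :
    P ≃* (prodHom ℤˣ (Perm.sign.comp D.toSubgroup.subtype)).ker :=
  let K := (prodHom ℤˣ (Perm.sign.comp D.toSubgroup.subtype)).ker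
  let f : K →* alternatingGroup (Fin (2 ^ (n + 1))) :=
    ((wreathToPerm D.toSubgroup).comp K.subtype).codRestrict _ fun w => by
      rw [Perm.mem_alternatingGroup, MonoidHom.comp_apply, sign_wreathToPerm hn]
      exact w.2
  P.mulEquivOfInjective (f := f)
    (fun v w h => Subtype.ext (wreathToPerm_injective _ (congrArg Subtype.val h))) <| by
      have : Nontrivial (Fin (2 ^ (n + 1))) := Fin.nontrivial_iff_two_le.2 (Nat.le_pow (by omega))
      have h := factorization_two_card_perm_eq_succ (α := Fin (2 ^ (n + 1)))
      rw [factorization_card_perm_two_pow] at h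
      rw [card_ker_prodHom_sign_sylow_perm hn]
      congr 1
      omega

end Wreath

/-- for `k ≥ 2`, a Sylow 2-subgroup of `A_{2^k}` has order
`2^(2^k - 2)` and its commutator subgroup has order `2^(2^k - k - 2)`. -/
theorem card_sylow_alt_and_commutator (k : ℕ) (hk : 2 ≤ k)
    (P : Sylow 2 (alternatingGroup (Fin (2 ^ k)))) :
    Nat.card ↥P = 2 ^ (2 ^ k - 2) ∧
      Nat.card ↥(commutator ↥P) = 2 ^ (2 ^ k - k - 2) := by
  obtain ⟨n, rfl⟩ : ∃ n, k = n + 1 := ⟨k - 1, by omega⟩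
  have hn : 1 ≤ n := by omega
  obtain ⟨D⟩ : Nonempty (Sylow 2 (Perm (Fin (2 ^ n)))) := inferInstance
  let e := Sylow.mulEquivKerProdHomSign hn D P
  refine ⟨(Nat.card_congr e.toEquiv).trans (card_ker_prodHom_sign_sylow_perm hn D), ?_⟩
  refine e.card_commutator_eq.trans ?_
  rw [Subgroup.card_commutator_eq,
    RegularWreathProduct.card_commutator_ker_prodHom, card_ker_sign_sylow_perm hn D,
    card_commutator_sylow_perm, ← pow_add]
  congr 1
  have : n + 1 ≤ 2 ^ n := Nat.lt_two_pow_self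
  rw [pow_succ]
  omega
end
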